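/- arXiv:1801.03602 — 3 statements merged into one kernel-verified Lean document; each statement's English description precedes it below -/
import Mathlib

section
/- Let 1 ≤ k_1 < k_2 < ... < k_s and n be positive integers, p a prime, q = p^r, and F_q = {0, α_1, ..., α_{q−1}} the Galois field of q elements. Let β_1, ..., β_s ∈ F_q^× and consider the symmetric polynomial F = Σ_{j=1}^{s} β_j e_{n,k_j}. Then S_{F_q}(F) = Σ_{m_1=0}^{n} Σ_{m_2=0}^{n−m_1} ... Σ_{m_{q−1}=0}^{n−m_1−...−m_{q−2}} multinomial(n; m_0*, m_1, ..., m_{q−1}) · exp((2πi/p) · Tr_{F_q/F_p}(Σ_{j=1}^{s} β_j Λ_{α_1,...,α_{q−1}}(k_j, m_1, ..., m_{q−1}))), where m_0* = n − (m_1 + ... + m_{q−1}). -/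
noncomputable section

/-- Evaluation of the elementary symmetric polynomial in `n` variables of degree `k`. -/
def esymmVal {R : Type*} [CommRing R] (n k : ℕ) (x : Fin n → R) : R :=
  ∑ s ∈ Finset.powersetCard k Finset.univ, ∏ i ∈ s, x i

/-- `Lam l a m k` is the quantity `Λ_{a_1,…,a_l}(k, m_1,…,m_l)`. -/
def Lam {R : Type*} [CommRing R] : (l : ℕ) → (Fin l → R) → (Fin l → ℕ) → ℤ → R
  | 0, _, _, k => if k = 0 then 1 else 0
  | l + 1, a, m, k =>
      ∑ j ∈ Finset.range (m (Fin.last l) + 1),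
        (Nat.choose (m (Fin.last l)) j : R) * a (Fin.last l) ^ j *
          Lam l (fun i => a i.castSucc) (fun i => m i.castSucc) (k - j)


/-!
Expanding `∏ₜ (1 + xₜ X) = ∏_{y ∈ 𝔽_q} (1 + y X) ^ #x⁻¹(y)`, the coefficient of `X ^ k` is
`e_{n,k}(x)` on the left and `Λ_α(k, m)` with `mᵢ = #x⁻¹(αᵢ)` on the right (the factor at
`y = 0` is `1`). So the summand depends on `x` only through the fibre sizes `m`, and the number of
`x` with fibre sizes `m` is the multinomial coefficient: it is the coefficient of `∏ X_y ^ m_y` in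
`(∑_y X_y) ^ n`, computed once by the multinomial theorem and once by expanding the power as a sum
over words `x`.
-/

open Finset

lemma prod_comp_eq_prod_pow_card_fiber {ι σ M : Type*} [Fintype ι] [Fintype σ] [DecidableEq σ]
    [CommMonoid M] (f : σ → M) (y : ι → σ) :
    ∏ t, f (y t) = ∏ o, f o ^ #{t | y t = o} := by
  rw [← prod_fiberwise' univ y f]
  simp only [prod_const]

section GeneratingPolynomials

open Polynomial

variable {R : Type*} [CommRing R]

lemma coeff_one_add_C_mul_X_pow (a : R) (M j : ℕ) :
    ((1 + C a * X) ^ M).coeff j = M.choose j * a ^ j := by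
  have : (1 + C a * X) ^ M = ((1 + X) ^ M).comp (C a * X) := by
    simp [pow_comp, add_comp]
  rw [this, comp_C_mul_X_coeff, coeff_one_add_X_pow]

lemma esymmVal_eq_coeff_prod {n : ℕ} (x : Fin n → R) (k : ℕ) :
    esymmVal n k x = (∏ t, (1 + C (x t) * X)).coeff k := by
  simp only [prod_one_add, prod_mul_distrib, prod_const, ← map_prod, finsetSum_coeff,
    coeff_C_mul_X_pow, esymmVal, powersetCard_eq_filter, sum_filter]
  exact sum_congr rfl fun t _ => by split_ifs <;> simp_all

lemma Lam_of_neg :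
    ∀ {l : ℕ} (a : Fin l → R) (m : Fin l → ℕ) {k : ℤ}, k < 0 → Lam l a m k = 0
  | 0, _, _, _, hk => if_neg hk.ne
  | l + 1, a, m, k, hk => sum_eq_zero fun j _ => by rw [Lam_of_neg _ _ (by omega), mul_zero]

/-- The recursion for `Λ` is the convolution of the coefficients of the last factor with those
of the product of the others. -/
theorem Lam_natCast_eq_coeff :
    ∀ {l : ℕ} (a : Fin l → R) (m : Fin l → ℕ) (k : ℕ),
      Lam l a m k = (∏ i, (1 + C (a i) * X) ^ m i).coeff k
  | 0, a, m, k => by simp [Lam, coeff_one]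
  | l + 1, a, m, k => by
    set M := m (Fin.last l)
    set Q := ∏ i : Fin l, (1 + C (a i.castSucc) * X) ^ m i.castSucc
    set c : ℕ → R := fun j => M.choose j * a (Fin.last l) ^ j
    set g : ℕ → R := fun j => Lam l (fun i => a i.castSucc) (fun i => m i.castSucc) (k - j)
    have hg : ∀ j ∈ range (k + 1), g j = Q.coeff (k - j) := fun j hj => by
      have : (k : ℤ) - j = ((k - j : ℕ) : ℤ) := by simp at hj; omega
      simp only [g, this, Lam_natCast_eq_coeff]; rfl
    have hc : ∀ j ∈ range (M + k + 1), j ∉ range (M + 1) → c j * g j = 0 := fun j _ hj => by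
      simp [c, Nat.choose_eq_zero_of_lt (by simpa using hj : M < j)]
    have hg0 : ∀ j ∈ range (M + k + 1), j ∉ range (k + 1) → c j * g j = 0 := fun j _ hj => by
      simp [g, Lam_of_neg _ _ (by simp at hj; omega : (k : ℤ) - j < 0)]
    calc Lam (l + 1) a m k = ∑ j ∈ range (M + 1), c j * g j := rfl
      _ = ∑ j ∈ range (k + 1), c j * g j := by
        rw [sum_subset (by intro j; simp; omega) hc, sum_subset (by intro j; simp; omega) hg0]
      _ = ∑ j ∈ range (k + 1), ((1 + C (a (Fin.last l)) * X) ^ M).coeff j * Q.coeff (k - j) :=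
        sum_congr rfl fun j hj => by rw [hg j hj, coeff_one_add_C_mul_X_pow]
      _ = _ := by
        rw [Fin.prod_univ_castSucc, mul_comm Q, coeff_mul,
          Nat.sum_antidiagonal_eq_sum_range_succ_mk]

lemma esymmVal_elim_eq_Lam {n l : ℕ} (a : Fin l → R)
    (y : Fin n → Option (Fin l)) (k : ℕ) :
    esymmVal n k (fun t => (y t).elim 0 a) = Lam l a (fun i => #{t | y t = some i}) k := by
  rw [esymmVal_eq_coeff_prod, Lam_natCast_eq_coeff]
  simp [prod_comp_eq_prod_pow_card_fiber (fun o : Option (Fin l) => 1 + C (o.elim 0 a) * X) y,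
    Fintype.prod_option]

end GeneratingPolynomials

lemma sum_comp_eq_sum_card_fiber_nsmul {ι κ M : Type*} [AddCommMonoid M] [DecidableEq κ]
    {s : Finset ι} {t : Finset κ} {g : ι → κ} (h : ∀ i ∈ s, g i ∈ t) (f : κ → M) :
    ∑ i ∈ s, f (g i) = ∑ j ∈ t, #{i ∈ s | g i = j} • f j := by
  rw [← sum_fiberwise_of_maps_to' h]
  simp only [sum_const]

lemma card_filter_eq_none_add_sum_card_filter_eq_some {ι σ : Type*} [Fintype ι] [Fintype σ]
    [DecidableEq σ] (y : ι → Option σ) :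
    #{t | y t = none} + ∑ i, #{t | y t = some i} = Fintype.card ι := by
  rw [← Fintype.sum_option (fun o => #{t | y t = o}), sum_card_fiberwise_eq_card_filter]
  simp

open MvPolynomial in
lemma card_filter_card_fiber_eq_multinomial {ι σ : Type*} [Fintype ι] [DecidableEq ι]
    [Fintype σ] [DecidableEq σ] (d : σ → ℕ) (hd : ∑ o, d o = Fintype.card ι) :
    #{y : ι → σ | ∀ o, #{t | y t = o} = d o} = Nat.multinomial univ d := by
  set cnt : (ι → σ) → σ →₀ ℕ := fun y => Finsupp.equivFunOnFinite.symm fun o => #{t | y t = o}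
  set D : σ →₀ ℕ := Finsupp.equivFunOnFinite.symm d
  have hmon : ∀ y : ι → σ, ∏ t, (X (y t) : MvPolynomial σ ℕ) = monomial (cnt y) 1 := fun y => by
    rw [monomial_eq, C_1, one_mul, Finsupp.prod_fintype _ _ (by simp),
      prod_comp_eq_prod_pow_card_fiber]
    rfl
  have hpow : (∑ o, X o : MvPolynomial σ ℕ) ^ Fintype.card ι =
      ∑ y : ι → σ, monomial (cnt y) 1 := by
    rw [← card_univ, ← prod_const, Fintype.prod_sum]
    exact sum_congr rfl fun y _ => hmon y
  have hcoeff := congrArg (coeff D) hpow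
  rw [coeff_sum_X_pow_of_fintype, Finsupp.sum_fintype _ _ (by simp),
    if_pos (by simpa [D] using hd), Finsupp.multinomial_eq_of_support_subset (subset_univ _),
    coeff_sum] at hcoeff
  simp only [coeff_monomial, sum_boole, Nat.cast_id] at hcoeff
  change Nat.multinomial univ d = _ at hcoeff
  rw [hcoeff]
  congr 1
  ext y
  simp [cnt, D, funext_iff]

lemma card_filter_card_fiber_some_eq_multinomial {n l : ℕ} (m : Fin l → ℕ)
    (hm : ∑ i, m i ≤ n) :
    #{y : Fin n → Option (Fin l) | (fun i => #{t | y t = some i}) = m}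
      = Nat.multinomial univ (fun o : Option (Fin l) => o.elim (n - ∑ i, m i) m) := by
  rw [← card_filter_card_fiber_eq_multinomial (ι := Fin n) _ (by simp [Fintype.sum_option]; omega)]
  refine congrArg card (filter_congr fun y _ => ?_)
  have htotal := card_filter_eq_none_add_sum_card_filter_eq_some y
  simp only [Fintype.card_fin] at htotal
  simp only [Option.forall, Option.elim, funext_iff]
  constructor
  · intro h
    refine ⟨?_, h⟩
    have : ∑ i, #{t | y t = some i} = ∑ i, m i := sum_congr rfl fun i _ => h i
    omega
  · exact fun h => h.2

lemma bijective_optionElim_zero {σ M : Type*} [Fintype σ] [Zero M] [Fintype M]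
    {a : σ → M} (hinj : Function.Injective a) (h0 : ∀ i, a i ≠ 0)
    (hcard : Fintype.card M = Fintype.card σ + 1) :
    Function.Bijective (fun o : Option σ => o.elim 0 a) := by
  rw [Fintype.bijective_iff_injective_and_card, Fintype.card_option, hcard]
  refine ⟨?_, rfl⟩
  rintro (_ | i) (_ | j) h
  · rfl
  · exact absurd h.symm (h0 j)
  · exact absurd h (h0 i)
  · exact congrArg some (hinj h)

theorem stmt3_general (p : ℕ) (r : ℕ) (n : ℕ)
    (s : ℕ) (k : Fin s → ℕ)
    (K : Type*) [Field K] [Fintype K] [Algebra (ZMod p) K]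
    (hcard : Fintype.card K = p ^ r)
    (β : Fin s → K)
    (α : Fin (p ^ r - 1) → K)
    (hinj : Function.Injective α) (h0 : ∀ i, α i ≠ 0) :
    (∑ x : Fin n → K,
        Complex.exp (2 * (Real.pi : ℂ) * Complex.I / p *
          ((Algebra.trace (ZMod p) K (∑ j, β j * esymmVal n (k j) x)).val : ℂ)))
      = ∑ m ∈ (Fintype.piFinset fun _ : Fin (p ^ r - 1) => Finset.range (n + 1)).filter
            (fun m => ∑ i, m i ≤ n),
          (Nat.multinomial Finset.univ
              (fun o : Option (Fin (p ^ r - 1)) => o.elim (n - ∑ i, m i) m) : ℂ) *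
            Complex.exp (2 * (Real.pi : ℂ) * Complex.I / p *
              ((Algebra.trace (ZMod p) K
                  (∑ j, β j * Lam (p ^ r - 1) α m (k j : ℤ))).val : ℂ)) := by
  have hpos : 0 < p ^ r := hcard ▸ Fintype.card_pos
  let E := Equiv.ofBijective _ (bijective_optionElim_zero hinj h0 (by simp; omega))
  set G : (Fin (p ^ r - 1) → ℕ) → ℂ := fun m => Complex.exp (2 * (Real.pi : ℂ) * Complex.I / p *
    ((Algebra.trace (ZMod p) K (∑ j, β j * Lam (p ^ r - 1) α m (k j : ℤ))).val : ℂ))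
  have hcounts : ∀ y : Fin n → Option (Fin (p ^ r - 1)), (fun i => #{t | y t = some i}) ∈
      (Fintype.piFinset fun _ => range (n + 1)).filter (fun m => ∑ i, m i ≤ n) := fun y => by
    have htotal := card_filter_eq_none_add_sum_card_filter_eq_some y
    simp only [Fintype.card_fin] at htotal
    simp only [mem_filter, Fintype.mem_piFinset, mem_range]
    refine ⟨fun i => ?_, by omega⟩
    have := single_le_sum (f := fun i => #{t | y t = some i}) (fun _ _ => Nat.zero_le _)
      (mem_univ i)
    omega
  calc _ = ∑ y : Fin n → Option (Fin (p ^ r - 1)), G fun i => #{t | y t = some i} := by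
        rw [← (Equiv.piCongrRight fun _ => E).sum_comp]
        refine sum_congr rfl fun y _ => ?_
        have hE : (Equiv.piCongrRight fun _ => E) y = fun t => (y t).elim 0 α := rfl
        simp only [hE, esymmVal_elim_eq_Lam, G]
    _ = _ := sum_comp_eq_sum_card_fiber_nsmul (fun y _ => hcounts y) G
    _ = _ := sum_congr rfl fun m hm => by
        rw [card_filter_card_fiber_some_eq_multinomial m (mem_filter.1 hm).2, nsmul_eq_mul]

/-- The exponential sum of `∑_j β_j e_{n,k_j}` over the Galois field `F_q`, `q = p^r`,
expressed as a multinomial sum; `m_0* = n - (m_1 + ⋯ + m_{q-1})`. -/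
theorem stmt3 (p : ℕ) [Fact p.Prime] (r : ℕ) (hr : 0 < r) (n : ℕ) (hn : 0 < n)
    (s : ℕ) (hs : 0 < s) (k : Fin s → ℕ) (hk1 : ∀ j, 1 ≤ k j) (hmono : StrictMono k)
    (K : Type*) [Field K] [Fintype K] [Algebra (ZMod p) K]
    (hcard : Fintype.card K = p ^ r)
    (β : Fin s → K) (hβ : ∀ j, β j ≠ 0)
    (α : Fin (p ^ r - 1) → K)
    (hinj : Function.Injective α) (h0 : ∀ i, α i ≠ 0) :
    (∑ x : Fin n → K,
        Complex.exp (2 * (Real.pi : ℂ) * Complex.I / p *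
          ((Algebra.trace (ZMod p) K (∑ j, β j * esymmVal n (k j) x)).val : ℂ)))
      = ∑ m ∈ (Fintype.piFinset fun _ : Fin (p ^ r - 1) => Finset.range (n + 1)).filter
            (fun m => ∑ i, m i ≤ n),
          (Nat.multinomial Finset.univ
              (fun o : Option (Fin (p ^ r - 1)) => o.elim (n - ∑ i, m i) m) : ℂ) *
            Complex.exp (2 * (Real.pi : ℂ) * Complex.I / p *
              ((Algebra.trace (ZMod p) K
                  (∑ j, β j * Lam (p ^ r - 1) α m (k j : ℤ))).val : ℂ)) :=
  stmt3_general p r n s k K hcard β α hinj h0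
end
end

section
/- Let F: Z^r → Z be periodic in each component with common period D (i.e., F(q_1, ..., q_j + D, ..., q_r) = F(q_1, ..., q_j, ..., q_r) for each j and all integers q_1, ..., q_r), and let ξ be a complex number with ξ^D = 1 (not necessarily primitive). Define S(n) = Σ_{q_1=0}^{n} Σ_{q_2=0}^{n−q_1} ... Σ_{q_r=0}^{n−q_1−...−q_{r−1}} C(n,q_1) C(n−q_1,q_2) ··· C(n−q_1−...−q_{r−1}, q_r) · ξ^{F(q_1,...,q_r)}. Then S(n) = (1/D^r) Σ_{b_r=0}^{D−1} ... Σ_{b_1=0}^{D−1} Σ_{j_1=0}^{D−1} ... Σ_{j_r=0}^{D−1} ξ^{F(b_1,...,b_r)} · ξ_D^{j_1 b_r + ... + j_r b_1} · λ_{j_1,...,j_r}^n, where ξ_D = exp(2πi/D) and λ_{j_1,...,j_r} = 1 + ξ_D^{−j_1} + ξ_D^{−j_2} + ... + ξ_D^{−j_r}. -/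
/-!
With `ζ = ξ_D`, the multinomial theorem expands `λ_j ^ n = (1 + ∑ ζ ^ (-j_i)) ^ n`, turning the
right-hand side into `∑_q C(q) ∑_b ξ ^ F(b) ∑_j ∏_i ζ ^ (j_i (b_i - q_i))`. The sum over `j` is a
roots-of-unity filter: it is `D ^ r` if `b ≡ q (mod D)` componentwise and `0` otherwise. So each `q`
selects the single `b = q mod D` in `[0, D)^r`, and periodicity of `F` gives `F b = F q`. The
reversal `b ∘ rev` in the exponent is absorbed by reindexing `j`.
-/

open Finset

lemma Fin.sum_Iio_succ {M : Type*} [AddCommMonoid M] {r : ℕ} (f : Fin (r + 1) → M) (i : Fin r) :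
    ∑ j ∈ Iio i.succ, f j = f 0 + ∑ j ∈ Iio i, f j.succ := by
  rw [← Ico_bot, bot_eq_zero, ← Ioo_insert_left i.succ_pos, sum_insert (by simp),
    ← Fin.map_succEmb_Iio, sum_map]
  rfl

def sumLeTuples (r n : ℕ) : Finset (Fin r → ℕ) :=
  (Fintype.piFinset fun _ : Fin r => range (n + 1)).filter fun q => ∑ i, q i ≤ n

/-- The multinomial coefficient `n! / (q₀! ⋯ q_{r-1}! (n - ∑ q)!)`, as a product of binomials. -/
def chooseProd {r : ℕ} (n : ℕ) (q : Fin r → ℕ) : ℕ :=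
  ∏ i, (n - ∑ j ∈ Iio i, q j).choose (q i)

lemma mem_sumLeTuples {r n : ℕ} {q : Fin r → ℕ} : q ∈ sumLeTuples r n ↔ ∑ i, q i ≤ n := by
  simp only [sumLeTuples, mem_filter, Fintype.mem_piFinset, mem_range, and_iff_right_iff_imp]
  exact fun h i => Nat.lt_succ_of_le ((single_le_sum (by simp) (mem_univ i)).trans h)

lemma chooseProd_cons {r : ℕ} (n k : ℕ) (q : Fin r → ℕ) :
    chooseProd n (Fin.cons k q : Fin (r + 1) → ℕ) = n.choose k * chooseProd (n - k) q := by
  have hIio : Iio (0 : Fin (r + 1)) = ∅ := Iio_eq_empty.2 isMin_bot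
  simp [chooseProd, Fin.prod_univ_succ, Fin.sum_Iio_succ, Nat.sub_add_eq, hIio]

lemma sum_sumLeTuples_succ {M : Type*} [AddCommMonoid M] (r n : ℕ) (f : (Fin (r + 1) → ℕ) → M) :
    ∑ q ∈ sumLeTuples (r + 1) n, f q =
      ∑ k ∈ range (n + 1), ∑ q ∈ sumLeTuples r (n - k), f (Fin.cons k q) := by
  rw [sum_sigma']
  refine (sum_bij' (fun p _ => Fin.cons p.1 p.2) (fun q _ => ⟨q 0, Fin.tail q⟩) ?_ ?_
    (by simp) (by simp) (by simp)).symm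
  · rintro ⟨k, q⟩ hkq
    simp only [mem_sigma, mem_range, mem_sumLeTuples, Fin.sum_cons] at hkq ⊢
    omega
  · intro q hq
    simp only [mem_sigma, mem_range, mem_sumLeTuples, Fin.sum_univ_succ] at hq ⊢
    exact ⟨by omega, by simp only [Fin.tail]; omega⟩

theorem one_add_sum_pow_eq_sum_sumLeTuples {R : Type*} [CommSemiring R] (r n : ℕ)
    (x : Fin r → R) :
    (1 + ∑ i, x i) ^ n = ∑ q ∈ sumLeTuples r n, (chooseProd n q : R) * ∏ i, x i ^ q i := by
  induction r generalizing n with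
  | zero => simp [sumLeTuples, chooseProd]
  | succ r ih =>
    rw [Fin.sum_univ_succ, add_left_comm, add_pow, sum_sumLeTuples_succ]
    refine sum_congr rfl fun k _ => ?_
    rw [ih, mul_sum, sum_mul]
    refine sum_congr rfl fun q _ => ?_
    simp only [chooseProd_cons, Fin.prod_univ_succ, Fin.cons_zero, Fin.cons_succ]
    push_cast
    ring

theorem eq_of_forall_modEq_of_periodic {ι M : Type*} [Fintype ι] [DecidableEq ι] {D : ℕ}
    {g : (ι → ℤ) → M} (hg : ∀ q j, g (Function.update q j (q j + D)) = g q) {q q' : ι → ℤ}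
    (h : ∀ i, q i ≡ q' i [ZMOD D]) : g q = g q' := by
  let periods : AddSubgroup (ι → ℤ) :=
    { carrier := {v | ∀ q, g (q + v) = g q}
      zero_mem' := by simp
      add_mem' := fun {v w} hv hw q => by simp only [← add_assoc, hw (q + v), hv q]
      neg_mem' := fun {v} hv q => by rw [← hv (q + -v), neg_add_cancel_right] }
  have hsingle : ∀ j, Pi.single j (D : ℤ) ∈ periods := fun j q => by
    rw [← hg q j]
    congr 1
    ext i
    rcases eq_or_ne i j with rfl | hij <;> simp [*]
  choose k hk using fun i => (h i).dvd
  have hdiff : q' - q = ∑ i, k i • Pi.single i (D : ℤ) := by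
    ext i
    simp [Finset.sum_apply, Pi.single_apply, hk i, mul_comm]
  have hmem : q' - q ∈ periods := by
    rw [hdiff]
    exact sum_mem fun i _ => zsmul_mem (hsingle i) (k i)
  simpa using (hmem q).symm

theorem IsPrimitiveRoot.sum_range_zpow_mul {K : Type*} [Field K] {ζ : K} {D : ℕ}
    (hζ : IsPrimitiveRoot ζ D) (m : ℤ) :
    ∑ j ∈ range D, ζ ^ ((j : ℤ) * m) = if (D : ℤ) ∣ m then (D : K) else 0 := by
  simp_rw [mul_comm _ m, zpow_mul, zpow_natCast]
  split_ifs with hm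
  · simp [(hζ.zpow_eq_one_iff_dvd m).2 hm]
  · have hne : ζ ^ m ≠ 1 := mt (hζ.zpow_eq_one_iff_dvd m).1 hm
    rw [geom_sum_eq hne, ← zpow_natCast, ← zpow_mul, mul_comm, zpow_mul, zpow_natCast,
      hζ.pow_eq_one, one_zpow, sub_self, zero_div]

theorem IsPrimitiveRoot.sum_piFinset_prod_zpow_mul {K ι : Type*} [Field K] [Fintype ι]
    [DecidableEq ι] {ζ : K} {D : ℕ} (hζ : IsPrimitiveRoot ζ D) (m : ι → ℤ) :
    ∑ jj ∈ Fintype.piFinset fun _ : ι => range D, ∏ i, ζ ^ ((jj i : ℤ) * m i) =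
      if ∀ i, (D : ℤ) ∣ m i then (D : K) ^ Fintype.card ι else 0 := by
  rw [sum_prod_piFinset (range D) fun i j => ζ ^ ((j : ℤ) * m i)]
  simp_rw [hζ.sum_range_zpow_mul, Fintype.prod_ite_zero, prod_const, card_univ]

theorem sum_filter_piFinset_range_dvd_sub {ι M : Type*} [Fintype ι] [DecidableEq ι]
    [AddCommMonoid M] {D : ℕ} (hD : 0 < D) {g : (ι → ℤ) → M}
    (hg : ∀ q j, g (Function.update q j (q j + D)) = g q) (q : ι → ℕ) :
    ∑ b ∈ Fintype.piFinset fun _ : ι => range D with ∀ i, (D : ℤ) ∣ (b i : ℤ) - q i,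
        g (fun i => (b i : ℤ)) = g fun i => (q i : ℤ) := by
  have hdvd_iff : ∀ {b c : ℕ}, b < D → ((D : ℤ) ∣ (b : ℤ) - c ↔ b = c % D) := fun hb => by
    rw [← Int.modEq_iff_dvd, Int.natCast_modEq_iff, Nat.ModEq, Nat.mod_eq_of_lt hb, eq_comm]
  have hfilter : (Fintype.piFinset fun _ : ι => range D).filter
      (fun b => ∀ i, (D : ℤ) ∣ (b i : ℤ) - q i) = {fun i => q i % D} := by
    ext b
    simp only [mem_filter, Fintype.mem_piFinset, mem_range, mem_singleton]
    constructor
    · exact fun ⟨hb, hbq⟩ => funext fun i => (hdvd_iff (hb i)).1 (hbq i)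
    · rintro rfl
      exact ⟨fun i => Nat.mod_lt _ hD, fun i => (hdvd_iff (Nat.mod_lt _ hD)).2 rfl⟩
  rw [hfilter, sum_singleton]
  refine eq_of_forall_modEq_of_periodic hg fun i => ?_
  exact Int.natCast_modEq_iff.2 (Nat.mod_modEq _ _)

theorem pow_mul_sum_chooseProd_mul_eq_sum_sum {K : Type*} [Field K] {ζ : K} {D : ℕ}
    (hζ : IsPrimitiveRoot ζ D) (hD : 0 < D) {r : ℕ} {g : (Fin r → ℤ) → K}
    (hg : ∀ q j, g (Function.update q j (q j + D)) = g q) (n : ℕ) :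
    (D : K) ^ r * ∑ q ∈ sumLeTuples r n, (chooseProd n q : K) * g (fun i => q i) =
      ∑ b ∈ Fintype.piFinset fun _ : Fin r => range D,
        ∑ jj ∈ Fintype.piFinset fun _ : Fin r => range D,
          g (fun i => b i) * ζ ^ (∑ i, jj i * b i) * (1 + ∑ i, ζ ^ (-(jj i : ℤ))) ^ n := by
  have hexp : ∀ b jj q : Fin r → ℕ, ζ ^ (∑ i, jj i * b i) * ∏ i, (ζ ^ (-(jj i : ℤ))) ^ q i =
      ∏ i, ζ ^ ((jj i : ℤ) * ((b i : ℤ) - q i)) := fun b jj q => by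
    rw [← prod_pow_eq_pow_sum, ← prod_mul_distrib]
    refine prod_congr rfl fun i _ => ?_
    rw [← zpow_natCast, ← zpow_natCast, ← zpow_mul, ← zpow_add₀ (hζ.ne_zero hD.ne')]
    push_cast
    ring_nf
  symm
  calc _ = ∑ q ∈ sumLeTuples r n, (chooseProd n q : K) *
        ∑ b ∈ Fintype.piFinset fun _ : Fin r => range D, g (fun i => b i) *
          ∑ jj ∈ Fintype.piFinset fun _ : Fin r => range D,
            ∏ i, ζ ^ ((jj i : ℤ) * ((b i : ℤ) - q i)) := by
        simp_rw [one_add_sum_pow_eq_sum_sumLeTuples, mul_sum, ← hexp]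
        refine (sum_congr rfl fun b _ => sum_comm).trans (sum_comm.trans ?_)
        exact sum_congr rfl fun q _ => sum_congr rfl fun b _ => sum_congr rfl fun jj _ => by ring
    _ = _ := by
        simp_rw [hζ.sum_piFinset_prod_zpow_mul, Fintype.card_fin, mul_sum]
        refine sum_congr rfl fun q _ => ?_
        rw [← sum_filter_piFinset_range_dvd_sub hD hg q, sum_filter, mul_sum, mul_sum]
        refine sum_congr rfl fun b _ => ?_
        split_ifs <;> ring

theorem sum_piFinset_comp_perm {ι α M : Type*} [Fintype ι] [DecidableEq ι] [AddCommMonoid M]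
    (σ : Equiv.Perm ι) (s : Finset α) (f : (ι → α) → M) :
    ∑ x ∈ Fintype.piFinset fun _ : ι => s, f (x ∘ σ) = ∑ x ∈ Fintype.piFinset fun _ : ι => s, f x :=
  sum_nbij' (· ∘ σ) (· ∘ σ.symm)
    (fun _ hx => Fintype.mem_piFinset.2 fun _ => Fintype.mem_piFinset.1 hx _)
    (fun _ hx => Fintype.mem_piFinset.2 fun _ => Fintype.mem_piFinset.1 hx _)
    (fun x _ => by ext; simp) (fun x _ => by ext; simp) (fun _ _ => rfl)

theorem stmt9_general (D : ℕ) (hD : 0 < D) (r : ℕ) (F : (Fin r → ℤ) → ℤ)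
    (hF : ∀ (q : Fin r → ℤ) (j : Fin r), F (Function.update q j (q j + D)) = F q)
    (ξ : ℂ)
    (ξD : ℂ) (hξD : ξD = Complex.exp (2 * (Real.pi : ℂ) * Complex.I / D)) (n : ℕ) :
    (∑ q ∈ (Fintype.piFinset fun _ : Fin r => Finset.range (n + 1)).filter
          (fun q => ∑ i, q i ≤ n),
        (∏ i : Fin r, ((n - ∑ j ∈ Finset.Iio i, q j).choose (q i) : ℂ)) *
          ξ ^ F (fun i => (q i : ℤ)))
      = (1 / (D : ℂ) ^ r) *
          ∑ b ∈ Fintype.piFinset fun _ : Fin r => Finset.range D,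
            ∑ jj ∈ Fintype.piFinset fun _ : Fin r => Finset.range D,
              ξ ^ F (fun i => (b i : ℤ)) *
                ξD ^ (∑ i : Fin r, jj i * b (Fin.rev i)) *
                  (1 + ∑ i : Fin r, ξD ^ (-(jj i : ℤ))) ^ n := by
  have hζ : IsPrimitiveRoot ξD D := hξD ▸ Complex.isPrimitiveRoot_exp D hD.ne'
  have hrev : ∀ b : Fin r → ℕ,
      ∑ jj ∈ Fintype.piFinset fun _ : Fin r => range D,
        ξ ^ F (fun i => (b i : ℤ)) * ξD ^ (∑ i, jj i * b (Fin.rev i)) *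
          (1 + ∑ i, ξD ^ (-(jj i : ℤ))) ^ n =
      ∑ jj ∈ Fintype.piFinset fun _ : Fin r => range D,
        ξ ^ F (fun i => (b i : ℤ)) * ξD ^ (∑ i, jj i * b i) *
          (1 + ∑ i, ξD ^ (-(jj i : ℤ))) ^ n := fun b => by
    rw [← sum_piFinset_comp_perm Fin.revPerm]
    refine sum_congr rfl fun jj _ => ?_
    have hsum := Equiv.sum_comp Fin.revPerm fun i => jj i * b i
    have hroots := Equiv.sum_comp Fin.revPerm fun i => ξD ^ (-(jj i : ℤ))
    simp only [Function.comp_apply, Fin.revPerm_apply] at hsum hroots ⊢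
    rw [hsum, hroots]
  have key := pow_mul_sum_chooseProd_mul_eq_sum_sum hζ hD (g := fun q => ξ ^ F q)
    (fun q j => by rw [hF]) n
  rw [sum_congr rfl fun b _ => hrev b, ← key, one_div,
    inv_mul_cancel_left₀ (pow_ne_zero r (Nat.cast_ne_zero.2 hD.ne'))]
  simp [sumLeTuples, chooseProd]

/-- Multinomial version: if `F : ℤ^r → ℤ` is periodic in each component with period `D` and
`ξ^D = 1`, then the multinomial sum
`S(n) = ∑_{q_1=0}^{n} ∑_{q_2=0}^{n-q_1} ⋯ C(n,q_1) C(n-q_1,q_2) ⋯ ξ^{F(q_1,…,q_r)}`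
(encoded as a sum over tuples `q` with `q_1 + ⋯ + q_r ≤ n`) equals
`(1/D^r) ∑_{b,j} ξ^{F(b_1,…,b_r)} ξ_D^{j_1 b_r + ⋯ + j_r b_1} λ_{j_1,…,j_r}^n`,
with `ξ_D = exp(2πi/D)` and `λ_{j_1,…,j_r} = 1 + ξ_D^{-j_1} + ⋯ + ξ_D^{-j_r}`. -/
theorem stmt9 (D : ℕ) (hD : 0 < D) (r : ℕ) (F : (Fin r → ℤ) → ℤ)
    (hF : ∀ (q : Fin r → ℤ) (j : Fin r), F (Function.update q j (q j + D)) = F q)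
    (ξ : ℂ) (hξ : ξ ^ D = 1)
    (ξD : ℂ) (hξD : ξD = Complex.exp (2 * (Real.pi : ℂ) * Complex.I / D)) (n : ℕ) :
    (∑ q ∈ (Fintype.piFinset fun _ : Fin r => Finset.range (n + 1)).filter
          (fun q => ∑ i, q i ≤ n),
        (∏ i : Fin r, ((n - ∑ j ∈ Finset.Iio i, q j).choose (q i) : ℂ)) *
          ξ ^ F (fun i => (q i : ℤ)))
      = (1 / (D : ℂ) ^ r) *
          ∑ b ∈ Fintype.piFinset fun _ : Fin r => Finset.range D,
            ∑ jj ∈ Fintype.piFinset fun _ : Fin r => Finset.range D,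
              ξ ^ F (fun i => (b i : ℤ)) *
                ξD ^ (∑ i : Fin r, jj i * b (Fin.rev i)) *
                  (1 + ∑ i : Fin r, ξD ^ (-(jj i : ℤ))) ^ n :=
  stmt9_general D hD r F hF ξ ξD hξD n
end

section
/- Let F: Z^r → Z be periodic in each component with common period D, and let ξ be a complex number with ξ^D = 1 (not necessarily primitive). Define S(n) = Σ_{q_1=0}^{n} Σ_{q_2=0}^{n−q_1} ... Σ_{q_r=0}^{n−q_1−...−q_{r−1}} C(n,q_1) C(n−q_1,q_2) ··· C(n−q_1−...−q_{r−1}, q_r) · ξ^{F(q_1,...,q_r)}. Then S(n) = Σ_{j_1=0}^{D−1} Σ_{j_2=0}^{j_1} ... Σ_{j_r=0}^{j_{r−1}} c_{j_1,...,j_r}(D) · (1 + ξ_D^{−j_1} + ... + ξ_D^{−j_r})^n, where c_{j_1,...,j_r}(D) = (1/D^r) Σ_{b_r=0}^{D−1} ... Σ_{b_1=0}^{D−1} ξ^{F(b_1,...,b_r)} Σ_{(j_1',...,j_r') ∈ Sym(j_1,...,j_r)} ξ_D^{j_1' b_r + ... + j_r' b_1}, and ξ_D = exp(2πi/D) and Sym(j_1,...,j_r)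 is the set of all distinct rearrangements of the tuple (j_1,...,j_r). -/
/-!
Periodicity of `F` makes `q ↦ ξ ^ F q` a function on `(ℤ/D)^r`, so discrete Fourier inversion
gives `ξ^{F(q)} = D^{-r} ∑_j (∑_b ξ^{F(b)} ξ_D^{j·b}) ξ_D^{-j·q}`. Substituting this into `S(n)`
and summing over `q` first, the multinomial theorem turns
`∑_q C(n,q_1) C(n-q_1,q_2) ⋯ ∏_i (ξ_D^{-j_i})^{q_i}` into `(1 + ξ_D^{-j_1} + ⋯ + ξ_D^{-j_r})^n`.
Finally the sum over all `j ∈ [0,D)^r` is regrouped according to the weakly decreasing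
rearrangement of `j`, on which that power depends only; reversing the order of the coordinates
of `j` produces the pairing `j'_1 b_r + ⋯ + j'_r b_1`.
-/

open Finset

section Periodic

variable {ι α : Type*} [DecidableEq ι] {D : ℤ} {g : (ι → ℤ) → α}

theorem apply_update_add_mul_of_periodic
    (hg : ∀ q j, g (Function.update q j (q j + D)) = g q) (q : ι → ℤ) (j : ι) (k : ℤ) :
    g (Function.update q j (q j + k * D)) = g q := by
  have hper : Function.Periodic (fun t => g (Function.update q j t)) D := fun t => by
    simpa using hg (Function.update q j t) j
  simpa using hper.int_mul k (q j)

theorem apply_eq_of_modEq_of_periodic [Fintype ι]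
    (hg : ∀ q j, g (Function.update q j (q j + D)) = g q) {q q' : ι → ℤ}
    (h : ∀ i, q i ≡ q' i [ZMOD D]) : g q = g q' := by
  suffices ∀ s : Finset ι, g (s.piecewise q' q) = g q by simpa using (this univ).symm
  intro s
  induction s using Finset.induction_on with
  | empty => simp
  | insert a s ha ih =>
    obtain ⟨k, hk⟩ := (h a).dvd
    have hq'a : q' a = s.piecewise q' q a + k * D := by
      rw [piecewise_eq_of_notMem _ _ _ ha]; linarith
    rw [piecewise_insert, hq'a, apply_update_add_mul_of_periodic hg, ih]

end Periodic

namespace IsPrimitiveRoot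

variable {K : Type*} [Field K] {ζ : K} {D : ℕ}

theorem sum_range_pow_zpow (hζ : IsPrimitiveRoot ζ D) (m : ℤ) :
    ∑ j ∈ range D, (ζ ^ m) ^ j = if (D : ℤ) ∣ m then (D : K) else 0 := by
  split_ifs with h
  · simp [(hζ.zpow_eq_one_iff_dvd m).2 h]
  · have hne : ζ ^ m ≠ 1 := mt (hζ.zpow_eq_one_iff_dvd m).1 h
    have hD : (ζ ^ m) ^ D = 1 := by
      rw [← zpow_natCast, ← zpow_mul, mul_comm, zpow_mul, zpow_natCast, hζ.pow_eq_one, one_zpow]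
    rw [geom_sum_eq hne, hD, sub_self, zero_div]

theorem sum_piFinset_prod_pow_zpow {ι : Type*} [Fintype ι] [DecidableEq ι]
    (hζ : IsPrimitiveRoot ζ D) (m : ι → ℤ) :
    ∑ j ∈ Fintype.piFinset (fun _ : ι => range D), ∏ i, (ζ ^ m i) ^ j i
      = if ∀ i, (D : ℤ) ∣ m i then (D : K) ^ Fintype.card ι else 0 := by
  rw [← prod_univ_sum (fun _ => range D) (fun i j => (ζ ^ m i) ^ j)]
  simp_rw [hζ.sum_range_pow_zpow, prod_ite_zero, prod_const, card_univ, mem_univ, true_imp_iff]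

theorem fourier_inversion_of_periodic [CharZero K] {ι : Type*} [Fintype ι] [DecidableEq ι]
    (hζ : IsPrimitiveRoot ζ D) (hD : 0 < D) {g : (ι → ℤ) → K}
    (hg : ∀ q j, g (Function.update q j (q j + D)) = g q) (q : ι → ℕ) :
    g (fun i => q i)
      = ∑ j ∈ Fintype.piFinset (fun _ : ι => range D),
          ((1 / (D : K) ^ Fintype.card ι) * ∑ b ∈ Fintype.piFinset (fun _ : ι => range D),
              g (fun i => b i) * ζ ^ (∑ i, j i * b i)) *
            ∏ i, (ζ ^ (-(j i : ℤ))) ^ q i := by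
  have hζ0 : ζ ≠ 0 := hζ.ne_zero hD.ne'
  have hterm : ∀ j b : ι → ℕ, ζ ^ (∑ i, j i * b i) * ∏ i, (ζ ^ (-(j i : ℤ))) ^ q i
      = ∏ i, (ζ ^ ((b i : ℤ) - q i)) ^ j i := by
    intro j b
    rw [← prod_pow_eq_pow_sum, ← prod_mul_distrib]
    refine prod_congr rfl fun i _ => ?_
    simp only [← zpow_natCast, ← zpow_mul, ← zpow_add₀ hζ0]
    congr 1
    push_cast
    ring
  set b₀ : ι → ℕ := fun i => q i % D
  have hb₀ : b₀ ∈ Fintype.piFinset (fun _ : ι => range D) :=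
    Fintype.mem_piFinset.2 fun i => mem_range.2 (Nat.mod_lt _ hD)
  have hdvd : ∀ b ∈ Fintype.piFinset (fun _ : ι => range D),
      (∀ i, (D : ℤ) ∣ (b i : ℤ) - q i) ↔ b = b₀ := by
    intro b hb
    simp only [← Nat.modEq_iff_dvd, funext_iff, b₀]
    refine forall_congr' fun i => ?_
    rw [Nat.ModEq, Nat.mod_eq_of_lt (mem_range.1 (Fintype.mem_piFinset.1 hb i)), eq_comm]
  have hD0 : (D : K) ^ Fintype.card ι ≠ 0 := pow_ne_zero _ (Nat.cast_ne_zero.2 hD.ne')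
  calc g (fun i => q i) = g (fun i => b₀ i) :=
        apply_eq_of_modEq_of_periodic hg fun i => by
          simpa [b₀, Int.natCast_mod] using (Int.mod_modEq (q i) D).symm
    _ = ∑ b ∈ Fintype.piFinset (fun _ : ι => range D), g (fun i => b i) *
          ((1 / (D : K) ^ Fintype.card ι) *
            ∑ j ∈ Fintype.piFinset (fun _ : ι => range D), ∏ i, (ζ ^ ((b i : ℤ) - q i)) ^ j i) := by
        rw [sum_eq_single_of_mem b₀ hb₀ fun b hb hne => ?_]
        · rw [hζ.sum_piFinset_prod_pow_zpow, if_pos ((hdvd b₀ hb₀).2 rfl)]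
          field_simp
        · rw [hζ.sum_piFinset_prod_pow_zpow, if_neg (mt (hdvd b hb).1 hne), mul_zero, mul_zero]
    _ = _ := by
        simp_rw [← hterm, mul_sum, sum_mul]
        rw [sum_comm]
        refine sum_congr rfl fun j _ => sum_congr rfl fun b _ => by ring

end IsPrimitiveRoot

theorem Fin.sum_Iio_succ_cons {M : Type*} [AddCommMonoid M] {r : ℕ} (a : M) (t : Fin r → M)
    (i : Fin r) : ∑ j ∈ Iio i.succ, (Fin.cons a t : Fin (r + 1) → M) j = a + ∑ j ∈ Iio i, t j := by
  simp only [← filter_gt_eq_Iio, sum_filter, Fin.sum_univ_succ, Fin.cons_zero, Fin.cons_succ,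
    Fin.succ_pos, if_true, Fin.succ_lt_succ_iff]

theorem prod_choose_sub_sum_Iio_cons {r : ℕ} (n a : ℕ) (t : Fin r → ℕ) :
    ∏ i, (n - ∑ j ∈ Iio i, (Fin.cons a t : Fin (r + 1) → ℕ) j).choose
        ((Fin.cons a t : Fin (r + 1) → ℕ) i)
      = n.choose a * ∏ i, (n - a - ∑ j ∈ Iio i, t j).choose (t i) := by
  simp [Fin.prod_univ_succ, Fin.sum_Iio_succ_cons, Nat.sub_sub, isMin_iff_eq_bot, bot_eq_zero]

theorem Fin.sum_piFinset_const_succ {α M : Type*} [AddCommMonoid M] {r : ℕ} (s : Finset α)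
    (f : (Fin (r + 1) → α) → M) :
    ∑ q ∈ Fintype.piFinset (fun _ => s), f q
      = ∑ a ∈ s, ∑ t ∈ Fintype.piFinset (fun _ : Fin r => s), f (Fin.cons a t) := by
  have h := Finset.filter_piFinset_eq_map_consEquiv (fun _ : Fin (r + 1) => s) (fun _ => True)
  simp only [filter_true] at h
  rw [h, sum_map, sum_product]
  rfl

theorem prod_choose_sub_sum_Iio_eq_zero :
    ∀ {r : ℕ} {n : ℕ} {q : Fin r → ℕ}, n < ∑ i, q i →
      ∏ i, (n - ∑ j ∈ Iio i, q j).choose (q i) = 0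
  | 0, _, _, h => by simp at h
  | r + 1, n, q, h => by
    rw [← Fin.cons_self_tail q, prod_choose_sub_sum_Iio_cons]
    rw [Fin.sum_univ_succ] at h
    rcases lt_or_ge n (q 0) with h0 | h0
    · rw [Nat.choose_eq_zero_of_lt h0, zero_mul]
    · rw [prod_choose_sub_sum_Iio_eq_zero (q := Fin.tail q) (by simp only [Fin.tail]; omega),
        mul_zero]

/-- Summing over `[0, m]^r` for some `m ≥ n` rather than over `[0, n]^r` keeps the index set
fixed when the induction passes from `n` to `n - q₀`; the extra terms vanish. -/
theorem sum_prod_choose_mul_prod_pow {R : Type*} [CommSemiring R] :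
    ∀ {r n m : ℕ}, n ≤ m → ∀ x : Fin r → R,
      ∑ q ∈ Fintype.piFinset (fun _ : Fin r => range (m + 1)),
          (∏ i, ((n - ∑ j ∈ Iio i, q j).choose (q i) : R)) * ∏ i, x i ^ q i
        = (1 + ∑ i, x i) ^ n
  | 0, _, _, _, _ => by simp
  | r + 1, n, m, hnm, x => by
    have hstep : ∀ a ∈ range (m + 1),
        ∑ t ∈ Fintype.piFinset (fun _ : Fin r => range (m + 1)),
            (∏ i, ((n - ∑ j ∈ Iio i, (Fin.cons a t : Fin (r + 1) → ℕ) j).choose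
              ((Fin.cons a t : Fin (r + 1) → ℕ) i) : R)) *
              ∏ i, x i ^ (Fin.cons a t : Fin (r + 1) → ℕ) i
          = x 0 ^ a * (1 + ∑ i : Fin r, x i.succ) ^ (n - a) * n.choose a := by
      intro a _
      rw [← sum_prod_choose_mul_prod_pow (n := n - a) (m := m) (by omega) (fun i => x i.succ),
        mul_sum, sum_mul]
      refine sum_congr rfl fun t _ => ?_
      rw [← Nat.cast_prod, prod_choose_sub_sum_Iio_cons, Fin.prod_univ_succ]
      push_cast
      simp only [Fin.cons_zero, Fin.cons_succ]
      ring
    have hvanish : ∀ a ∈ range (m + 1), a ∉ range (n + 1) →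
        x 0 ^ a * (1 + ∑ i : Fin r, x i.succ) ^ (n - a) * (n.choose a : R) = 0 := by
      intro a _ ha
      rw [Nat.choose_eq_zero_of_lt (by simpa using ha), Nat.cast_zero, mul_zero]
    rw [Fin.sum_piFinset_const_succ, sum_congr rfl hstep,
      ← sum_subset (range_subset_range.2 (by omega)) hvanish, Fin.sum_univ_succ,
      add_left_comm, ← add_pow]

theorem Tuple.exists_perm_antitone_comp {α : Type*} [LinearOrder α] {r : ℕ} (j : Fin r → α) :
    ∃ σ : Equiv.Perm (Fin r), Antitone (j ∘ σ) :=
  ⟨Tuple.sort (OrderDual.toDual ∘ j), monotone_toDual_comp_iff.1 (Tuple.monotone_sort _)⟩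

namespace List

variable {α : Type*} {r : ℕ}

theorem eq_of_perm_ofFn_of_antitone [PartialOrder α] {a b : Fin r → α} (ha : Antitone a)
    (hb : Antitone b) (h : ofFn a ~ ofFn b) : a = b :=
  ofFn_injective <| h.eq_of_pairwise' (r := (· ≥ ·))
    (pairwise_ofFn.2 fun _ _ hi => ha hi.le) (pairwise_ofFn.2 fun _ _ hi => hb hi.le)

theorem exists_eq_ofFn_of_perm_ofFn {t : Finset α} {a : Fin r → α}
    (ha : a ∈ Fintype.piFinset fun _ => t) {γ : List α} (h : γ ~ ofFn a) :
    ∃ j ∈ Fintype.piFinset fun _ : Fin r => t, ofFn j = γ := by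
  obtain rfl : γ.length = r := by simpa using h.length_eq
  refine ⟨fun i => γ[i], Fintype.mem_piFinset.2 fun i => ?_, ofFn_getElem⟩
  obtain ⟨k, hk⟩ := mem_ofFn.1 (h.subset (getElem_mem i.2))
  exact hk ▸ Fintype.mem_piFinset.1 ha k

end List

theorem Finset.sum_antitone_sum_permutations {α M : Type*} [LinearOrder α] [AddCommMonoid M]
    {r : ℕ} (t : Finset α) (f : List α → M) :
    ∑ a ∈ (Fintype.piFinset fun _ : Fin r => t).filter (fun a => ∀ i i', i ≤ i' → a i' ≤ a i),
        ∑ γ ∈ (List.ofFn a).permutations.toFinset, f γ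
      = ∑ j ∈ Fintype.piFinset (fun _ : Fin r => t), f (List.ofFn j) := by
  have hdisj : ((Fintype.piFinset fun _ : Fin r => t).filter
      (fun a => ∀ i i', i ≤ i' → a i' ≤ a i) : Set (Fin r → α)).PairwiseDisjoint
        fun a => (List.ofFn a).permutations.toFinset := by
    intro a ha b hb hab
    refine disjoint_left.2 fun γ hγa hγb => hab ?_
    simp only [coe_filter, Set.mem_ofPred_eq, List.mem_toFinset, List.mem_permutations] at *
    exact List.eq_of_perm_ofFn_of_antitone ha.2 hb.2 (hγa.symm.trans hγb)
  have hunion : ((Fintype.piFinset fun _ : Fin r => t).filter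
      (fun a => ∀ i i', i ≤ i' → a i' ≤ a i)).biUnion
        (fun a => (List.ofFn a).permutations.toFinset)
      = (Fintype.piFinset fun _ : Fin r => t).image List.ofFn := by
    ext γ
    simp only [mem_biUnion, mem_filter, mem_image, List.mem_toFinset, List.mem_permutations]
    constructor
    · rintro ⟨a, ⟨ha, -⟩, hγ⟩
      exact List.exists_eq_ofFn_of_perm_ofFn ha hγ
    · rintro ⟨j, hj, rfl⟩
      obtain ⟨σ, hσ⟩ := Tuple.exists_perm_antitone_comp j
      refine ⟨j ∘ σ, ⟨Fintype.mem_piFinset.2 fun i => Fintype.mem_piFinset.1 hj (σ i),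
        fun _ _ h => hσ h⟩, (Equiv.Perm.ofFn_comp_perm σ j).symm⟩
  rw [← sum_biUnion hdisj, hunion, sum_image fun _ _ _ _ h => List.ofFn_injective h]

theorem Fintype.sum_piFinset_const_comp_perm {ι α M : Type*} [Fintype ι] [DecidableEq ι]
    [AddCommMonoid M] (σ : Equiv.Perm ι) (t : Finset α) (f : (ι → α) → M) :
    ∑ j ∈ Fintype.piFinset (fun _ => t), f (j ∘ σ) = ∑ j ∈ Fintype.piFinset (fun _ => t), f j :=
  sum_nbij' (· ∘ σ) (· ∘ σ.symm)
    (fun _ ha => Fintype.mem_piFinset.2 fun i => Fintype.mem_piFinset.1 ha (σ i))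
    (fun _ ha => Fintype.mem_piFinset.2 fun i => Fintype.mem_piFinset.1 ha (σ.symm i))
    (fun _ _ => by ext; simp)
    (fun _ _ => by ext; simp) fun _ _ => rfl

theorem sum_prod_choose_mul_periodic {K : Type*} [Field K] [CharZero K] {ζ : K} {D : ℕ}
    (hζ : IsPrimitiveRoot ζ D) (hD : 0 < D) {r : ℕ} {g : (Fin r → ℤ) → K}
    (hg : ∀ q j, g (Function.update q j (q j + D)) = g q) (n : ℕ) :
    ∑ q ∈ (Fintype.piFinset fun _ : Fin r => range (n + 1)).filter (fun q => ∑ i, q i ≤ n),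
        (∏ i, ((n - ∑ j ∈ Iio i, q j).choose (q i) : K)) * g (fun i => q i)
      = ∑ j ∈ Fintype.piFinset (fun _ : Fin r => range D),
          ((1 / (D : K) ^ r) * ∑ b ∈ Fintype.piFinset (fun _ : Fin r => range D),
              g (fun i => b i) * ζ ^ (∑ i, j i * b i)) *
            (1 + ∑ i, ζ ^ (-(j i : ℤ))) ^ n := by
  rw [sum_filter_of_ne fun q _ hq => not_lt.1 fun hn => hq ?_]
  · rw [sum_congr rfl fun q _ => by rw [hζ.fourier_inversion_of_periodic hD hg q]]
    simp_rw [Fintype.card_fin, mul_sum]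
    rw [sum_comm]
    refine sum_congr rfl fun j _ => ?_
    rw [← sum_prod_choose_mul_prod_pow le_rfl, mul_sum]
    exact sum_congr rfl fun q _ => by ring
  · rw [← Nat.cast_prod, prod_choose_sub_sum_Iio_eq_zero hn, Nat.cast_zero, zero_mul]

theorem sum_antitone_permutations_eq_sum_piFinset {K : Type*} [Field K] (ζ c : K) (D n : ℕ)
    {r : ℕ} (G : (Fin r → ℕ) → K) :
    ∑ jj ∈ (Fintype.piFinset fun _ : Fin r => range D).filter
          (fun jj => ∀ i i' : Fin r, i ≤ i' → jj i' ≤ jj i),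
        (c * ∑ b ∈ Fintype.piFinset fun _ : Fin r => range D,
            G b * ∑ γ ∈ (List.ofFn jj).permutations.toFinset,
              ζ ^ (∑ i : Fin r, γ.getD (i : ℕ) 0 * b (Fin.rev i))) *
          (1 + ∑ i : Fin r, ζ ^ (-(jj i : ℤ))) ^ n
      = ∑ j ∈ Fintype.piFinset (fun _ : Fin r => range D),
          (c * ∑ b ∈ Fintype.piFinset (fun _ : Fin r => range D), G b * ζ ^ (∑ i, j i * b i)) *
            (1 + ∑ i, ζ ^ (-(j i : ℤ))) ^ n := by
  set h : List ℕ → K := fun γ =>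
    (c * ∑ b ∈ Fintype.piFinset fun _ : Fin r => range D,
        G b * ζ ^ (∑ i : Fin r, γ.getD (i : ℕ) 0 * b (Fin.rev i))) *
      (1 + (γ.map fun m : ℕ => ζ ^ (-(m : ℤ))).sum) ^ n
  have hperm (jj : Fin r → ℕ) :
      (c * ∑ b ∈ Fintype.piFinset fun _ : Fin r => range D,
          G b * ∑ γ ∈ (List.ofFn jj).permutations.toFinset,
            ζ ^ (∑ i : Fin r, γ.getD (i : ℕ) 0 * b (Fin.rev i))) *
        (1 + ∑ i : Fin r, ζ ^ (-(jj i : ℤ))) ^ n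
      = ∑ γ ∈ (List.ofFn jj).permutations.toFinset, h γ := by
    have hsum : ∀ γ ∈ (List.ofFn jj).permutations.toFinset,
        (γ.map fun m : ℕ => ζ ^ (-(m : ℤ))).sum = ∑ i, ζ ^ (-(jj i : ℤ)) := fun γ hγ => by
      rw [((List.mem_permutations.1 (List.mem_toFinset.1 hγ)).map _).sum_eq, List.map_ofFn,
        List.sum_ofFn]
      rfl
    simp only [h, mul_sum, sum_mul]
    rw [sum_comm]
    exact sum_congr rfl fun γ hγ => sum_congr rfl fun b _ => by rw [hsum γ hγ]
  rw [sum_congr rfl fun jj _ => hperm jj, sum_antitone_sum_permutations, eq_comm,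
    ← Fintype.sum_piFinset_const_comp_perm Fin.revPerm]
  refine sum_congr rfl fun j _ => ?_
  have hpairing (b : Fin r → ℕ) : ∑ i, j (Fin.rev i) * b i = ∑ i, j i * b (Fin.rev i) := by
    rw [← Equiv.sum_comp Fin.revPerm]
    simp
  have hpow : ∑ i, ζ ^ (-(j (Fin.rev i) : ℤ)) = ∑ i, ζ ^ (-(j i : ℤ)) :=
    Equiv.sum_comp Fin.revPerm fun i => ζ ^ (-(j i : ℤ))
  simp only [h, Function.comp_apply, Fin.revPerm_apply, List.getD_eq_getElem?_getD,
    List.length_ofFn, Fin.is_lt, getElem?_pos, List.getElem_ofFn, Fin.eta, Option.getD_some,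
    List.map_ofFn, List.sum_ofFn, hpairing, hpow]

theorem stmt10_general (D : ℕ) (hD : 0 < D) (r : ℕ) (F : (Fin r → ℤ) → ℤ)
    (hF : ∀ (q : Fin r → ℤ) (j : Fin r), F (Function.update q j (q j + D)) = F q)
    (ξ : ℂ) (ξD : ℂ) (hξD : ξD = Complex.exp (2 * (Real.pi : ℂ) * Complex.I / D)) (n : ℕ) :
    (∑ q ∈ (Fintype.piFinset fun _ : Fin r => Finset.range (n + 1)).filter
          (fun q => ∑ i, q i ≤ n),
        (∏ i : Fin r, ((n - ∑ j ∈ Finset.Iio i, q j).choose (q i) : ℂ)) *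
          ξ ^ F (fun i => (q i : ℤ)))
      = ∑ jj ∈ (Fintype.piFinset fun _ : Fin r => Finset.range D).filter
            (fun jj => ∀ i i' : Fin r, i ≤ i' → jj i' ≤ jj i),
          ((1 / (D : ℂ) ^ r) *
              ∑ b ∈ Fintype.piFinset fun _ : Fin r => Finset.range D,
                ξ ^ F (fun i => (b i : ℤ)) *
                  ∑ γ ∈ (List.ofFn jj).permutations.toFinset,
                    ξD ^ (∑ i : Fin r, γ.getD (i : ℕ) 0 * b (Fin.rev i))) *
            (1 + ∑ i : Fin r, ξD ^ (-(jj i : ℤ))) ^ n := by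
  have hζ : IsPrimitiveRoot ξD D := hξD ▸ Complex.isPrimitiveRoot_exp D hD.ne'
  rw [sum_prod_choose_mul_periodic hζ hD (g := fun q => ξ ^ F q) (fun q j => by rw [hF]) n,
    sum_antitone_permutations_eq_sum_piFinset]

/-- Closed formula with coefficients grouped by rearrangements: with notation as in the paper,
`S(n) = ∑_{j_1=0}^{D-1} ∑_{j_2=0}^{j_1} ⋯ ∑_{j_r=0}^{j_{r-1}} c_{j_1,…,j_r}(D)
(1 + ξ_D^{-j_1} + ⋯ + ξ_D^{-j_r})^n`, where
`c_{j_1,…,j_r}(D) = (1/D^r) ∑_b ξ^{F(b_1,…,b_r)} ∑_{j' ∈ Sym(j_1,…,j_r)}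
ξ_D^{j_1' b_r + ⋯ + j_r' b_1}`.  The nested decreasing sums are encoded as a sum over
weakly decreasing tuples `jj` with entries in `[0, D-1]`, and `Sym(jj)` as the set of
distinct permutations of the list `[j_1,…,j_r]`. -/
theorem stmt10 (D : ℕ) (hD : 0 < D) (r : ℕ) (F : (Fin r → ℤ) → ℤ)
    (hF : ∀ (q : Fin r → ℤ) (j : Fin r), F (Function.update q j (q j + D)) = F q)
    (ξ : ℂ) (hξ : ξ ^ D = 1)
    (ξD : ℂ) (hξD : ξD = Complex.exp (2 * (Real.pi : ℂ) * Complex.I / D)) (n : ℕ) :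
    (∑ q ∈ (Fintype.piFinset fun _ : Fin r => Finset.range (n + 1)).filter
          (fun q => ∑ i, q i ≤ n),
        (∏ i : Fin r, ((n - ∑ j ∈ Finset.Iio i, q j).choose (q i) : ℂ)) *
          ξ ^ F (fun i => (q i : ℤ)))
      = ∑ jj ∈ (Fintype.piFinset fun _ : Fin r => Finset.range D).filter
            (fun jj => ∀ i i' : Fin r, i ≤ i' → jj i' ≤ jj i),
          ((1 / (D : ℂ) ^ r) *
              ∑ b ∈ Fintype.piFinset fun _ : Fin r => Finset.range D,
                ξ ^ F (fun i => (b i : ℤ)) *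
                  ∑ γ ∈ (List.ofFn jj).permutations.toFinset,
                    ξD ^ (∑ i : Fin r, γ.getD (i : ℕ) 0 * b (Fin.rev i))) *
            (1 + ∑ i : Fin r, ξD ^ (-(jj i : ℤ))) ^ n :=
  stmt10_general D hD r F hF ξ ξD hξD n
end
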